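/- Let x ∈ Q1, let p̃ be a δ1-inexact solution of min_{p∈Q2} Φ(x,p), and let x̂ be a δ2-inexact solution of min_{x'∈Q1} Φ(x',p̃). Then ‖v(u(x)) − x̂‖ ≤ √(2δ2/σ1) + (L1·L2/σ1)·√(2δ1/σ2). Analogously, if p ∈ Q2, x̃ is a δ2-inexact solution of min_{x∈Q1} Φ(x,p), and q̂ is a δ1-inexact solution of min_{p'∈Q2} Φ(x̃,p'), then ‖u(v(p)) − q̂‖ ≤ √(2δ1/σ2) + (L1·L2/σ2)·√(2δ2/σ1). -/

import Mathlib

open Finset Filter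

/-- `F₀` is `β`-strongly convex on `Q` w.r.t. the norm-like function `Nrm`. -/
def StrongConvexOnW {V : Type*} [AddCommGroup V] [Module ℝ V]
    (Q : Set V) (Nrm : V → ℝ) (β : ℝ) (F₀ : V → ℝ) : Prop :=
  ∀ ⦃x⦄, x ∈ Q → ∀ ⦃y⦄, y ∈ Q → ∀ ⦃α : ℝ⦄, 0 ≤ α → α ≤ 1 →
    F₀ (α • x + (1 - α) • y) ≤
      α * F₀ x + (1 - α) * F₀ y - α * (1 - α) * (β / 2) * Nrm (x - y) ^ 2

/-- `zt` is a `δ`-inexact solution of `min_{z ∈ Q} F₀ z`, where `zs` is the exact minimizer. -/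
def InexactSol {V : Type*} [NormedAddCommGroup V] [NormedSpace ℝ V]
    (Q : Set V) (F₀ : V → ℝ) (zs zt : V) (δ : ℝ) : Prop :=
  zt ∈ Q ∧ ∃ g : V →L[ℝ] ℝ, (∀ y ∈ Q, F₀ zt + g (y - zt) ≤ F₀ y) ∧ -δ ≤ g (zs - zt)

/-- The dual norm of `normH` w.r.t. the standard inner product on `ℝ^m`. -/
noncomputable def dualNormH {m : ℕ} (normH : (Fin m → ℝ) → ℝ) (z : Fin m → ℝ) : ℝ :=
  sSup {r | ∃ y, normH y ≤ 1 ∧ r = ∑ j, z j * y j}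

lemma normH_sum_le {m : ℕ} (normH : (Fin m → ℝ) → ℝ) (h0 : normH 0 = 0)
    (hNtri : ∀ y z, normH (y + z) ≤ normH y + normH z)
    {ι : Type*} (s : Finset ι) (g : ι → Fin m → ℝ) :
    normH (∑ i ∈ s, g i) ≤ ∑ i ∈ s, normH (g i) := by
  classical
  induction s using Finset.induction with
  | empty => simp [h0]
  | insert _ _ hx ih =>
      rw [Finset.sum_insert hx, Finset.sum_insert hx]
      exact (hNtri _ _).trans (by linarith)

lemma normH_coercive {m : ℕ} (normH : (Fin m → ℝ) → ℝ)
    (hNpos : ∀ y, 0 ≤ normH y)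
    (hNdef : ∀ y, normH y = 0 → y = 0)
    (hNhom : ∀ (c : ℝ) (y : Fin m → ℝ), normH (c • y) = |c| * normH y)
    (hNtri : ∀ y z, normH (y + z) ≤ normH y + normH z) :
    ∃ c : ℝ, 0 < c ∧ ∀ y, c * ‖y‖ ≤ normH y := by
  have h0 : normH 0 = 0 := by
    have := hNhom 0 0; simpa using this
  rcases Nat.eq_zero_or_pos m with hm | hm
  · refine ⟨1, one_pos, fun y => ?_⟩
    have hy : y = 0 := funext (fun j => absurd j.2 (by omega))
    simp [hy, h0]
  · haveI : Nonempty (Fin m) := ⟨⟨0, hm⟩⟩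
    have hsub : ∀ a b : Fin m → ℝ, normH a - normH b ≤ normH (a - b) := by
      intro a b
      have := hNtri (a - b) b
      simp only [sub_add_cancel] at this
      linarith
    have hsymm : ∀ a b : Fin m → ℝ, normH (a - b) = normH (b - a) := by
      intro a b
      have := hNhom (-1) (b - a)
      simpa [neg_sub] using this
    set sing : Fin m → (Fin m → ℝ) := fun j => Pi.single j 1 with hsing
    have hbound : ∀ y, normH y ≤ (∑ j, normH (sing j)) * ‖y‖ := by
      intro y
      have hy : y = ∑ j, y j • sing j := by
        funext k
        simp [hsing, Finset.sum_apply, Pi.single_apply, mul_ite]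
      calc normH y = normH (∑ j, y j • sing j) := by rw [← hy]
        _ ≤ ∑ j, normH (y j • sing j) := normH_sum_le normH h0 hNtri _ _
        _ = ∑ j, |y j| * normH (sing j) := by simp [hNhom]
        _ ≤ ∑ j, ‖y‖ * normH (sing j) :=
            Finset.sum_le_sum fun j _ =>
              mul_le_mul_of_nonneg_right (by simpa using norm_le_pi_norm y j) (hNpos _)
        _ = _ := by rw [Finset.sum_mul]; exact Finset.sum_congr rfl fun j _ => mul_comm _ _
    have hcont : Continuous normH := by
      set K := ∑ j, normH (sing j) with hKdef
      have hK0 : 0 ≤ K := Finset.sum_nonneg fun j _ => hNpos _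
      apply LipschitzWith.continuous (K := K.toNNReal)
      apply LipschitzWith.of_dist_le_mul
      intro a b
      rw [Real.dist_eq, dist_eq_norm, Real.coe_toNNReal K hK0, abs_sub_le_iff]
      constructor
      · exact (hsub a b).trans (hbound (a - b))
      · have := (hsub b a).trans (hbound (b - a))
        rwa [norm_sub_rev] at this
    have hsph : IsCompact (Metric.sphere (0 : Fin m → ℝ) 1) := isCompact_sphere 0 1
    have hne : (Metric.sphere (0 : Fin m → ℝ) 1).Nonempty := by
      refine ⟨fun _ => 1, ?_⟩
      rw [mem_sphere_zero_iff_norm]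
      simpa using (Pi.norm_const (ι := Fin m) (1:ℝ))
    obtain ⟨y0, hy0mem, hy0min⟩ := hsph.exists_isMinOn hne hcont.continuousOn
    have hy0ne : y0 ≠ 0 := by
      intro h
      rw [mem_sphere_zero_iff_norm, h] at hy0mem
      simp at hy0mem
    have hc : 0 < normH y0 := (hNpos y0).lt_of_ne fun h => hy0ne (hNdef y0 h.symm)
    refine ⟨normH y0, hc, fun y => ?_⟩
    by_cases hy : y = 0
    · simp [hy, h0]
    · have hny : 0 < ‖y‖ := norm_pos_iff.mpr hy
      have hw : ‖y‖⁻¹ • y ∈ Metric.sphere (0 : Fin m → ℝ) 1 := by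
        rw [mem_sphere_zero_iff_norm, norm_smul, norm_inv, norm_norm]
        exact inv_mul_cancel₀ hny.ne'
      have heq : normH (‖y‖⁻¹ • y) = ‖y‖⁻¹ * normH y := by
        rw [hNhom, abs_of_pos (inv_pos.mpr hny)]
      have hmin : normH y0 ≤ ‖y‖⁻¹ * normH y := by
        have := hy0min hw; simpa [heq] using this
      have := mul_le_mul_of_nonneg_left hmin hny.le
      rw [mul_comm (normH y0) ‖y‖]
      calc ‖y‖ * normH y0 ≤ ‖y‖ * (‖y‖⁻¹ * normH y) := this
        _ = normH y := by field_simp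
lemma pairing_le {m : ℕ} (normH : (Fin m → ℝ) → ℝ)
    (hNpos : ∀ y, 0 ≤ normH y)
    (hNdef : ∀ y, normH y = 0 → y = 0)
    (hNhom : ∀ (c : ℝ) (y : Fin m → ℝ), normH (c • y) = |c| * normH y)
    (hNtri : ∀ y z, normH (y + z) ≤ normH y + normH z)
    (z y : Fin m → ℝ) :
    ∑ j, z j * y j ≤ dualNormH normH z * normH y := by
  obtain ⟨c, hc, hcoer⟩ := normH_coercive normH hNpos hNdef hNhom hNtri
  have hbdd : BddAbove {r | ∃ y, normH y ≤ 1 ∧ r = ∑ j, z j * y j} := by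
    refine ⟨(∑ j, |z j|) / c, ?_⟩
    rintro r ⟨w, hw, rfl⟩
    have hwnorm : ‖w‖ ≤ 1 / c := by
      rw [le_div_iff₀ hc, mul_comm]
      linarith [hcoer w]
    calc ∑ j, z j * w j ≤ ∑ j, |z j| * ‖w‖ := by
          refine Finset.sum_le_sum fun j _ => ?_
          calc z j * w j ≤ |z j * w j| := le_abs_self _
            _ = |z j| * |w j| := abs_mul _ _
            _ ≤ |z j| * ‖w‖ :=
                mul_le_mul_of_nonneg_left (by simpa using norm_le_pi_norm w j) (abs_nonneg _)
      _ = (∑ j, |z j|) * ‖w‖ := by rw [Finset.sum_mul]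
      _ ≤ (∑ j, |z j|) * (1 / c) :=
          mul_le_mul_of_nonneg_left hwnorm (Finset.sum_nonneg fun j _ => abs_nonneg _)
      _ = (∑ j, |z j|) / c := by ring
  by_cases h0 : normH y = 0
  · have hy0 : y = 0 := hNdef y h0
    subst hy0
    simp [h0]
  · have hpos : 0 < normH y := (hNpos y).lt_of_ne (Ne.symm h0)
    set t := normH y with ht
    have hwt : normH (t⁻¹ • y) = 1 := by
      rw [hNhom, abs_of_pos (inv_pos.mpr hpos), ← ht, inv_mul_cancel₀ hpos.ne']
    have hmem : (∑ j, z j * (t⁻¹ • y) j) ∈ {r | ∃ y, normH y ≤ 1 ∧ r = ∑ j, z j * y j} :=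
      ⟨t⁻¹ • y, le_of_eq hwt, rfl⟩
    have hle : ∑ j, z j * (t⁻¹ • y) j ≤ dualNormH normH z := le_csSup hbdd hmem
    have hsum : ∑ j, z j * (t⁻¹ • y) j = t⁻¹ * ∑ j, z j * y j := by
      rw [Finset.mul_sum]
      exact Finset.sum_congr rfl fun j _ => by simp [Pi.smul_apply, smul_eq_mul]; ring
    rw [hsum] at hle
    have h2 := mul_le_mul_of_nonneg_left hle hpos.le
    calc ∑ j, z j * y j = t * (t⁻¹ * ∑ j, z j * y j) := by field_simp
      _ ≤ t * dualNormH normH z := h2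
      _ = dualNormH normH z * t := mul_comm _ _

lemma strong_min {V : Type*} [NormedAddCommGroup V] [NormedSpace ℝ V] {Q : Set V}
    (hQ : Convex ℝ Q) {β : ℝ} {F₀ : V → ℝ}
    (hsc : StrongConvexOnW Q (fun x => ‖x‖) β F₀)
    {z : V} (hz : z ∈ Q) (hmin : ∀ y ∈ Q, F₀ z ≤ F₀ y) :
    ∀ y ∈ Q, F₀ z + β / 2 * ‖y - z‖ ^ 2 ≤ F₀ y := by
  intro y hy
  set c := β / 2 * ‖y - z‖ ^ 2 with hc
  have key : ∀ α : ℝ, 0 < α → α ≤ 1 → F₀ z + (1 - α) * c ≤ F₀ y := by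
    intro α hα0 hα1
    have hmem : α • y + (1 - α) • z ∈ Q := hQ hy hz hα0.le (by linarith) (by ring)
    have h1 : F₀ (α • y + (1 - α) • z) ≤
        α * F₀ y + (1 - α) * F₀ z - α * (1 - α) * (β / 2) * ‖y - z‖ ^ 2 :=
      hsc hy hz hα0.le hα1
    have h2 := hmin _ hmem
    have h3 : α * (F₀ z + (1 - α) * c) ≤ α * F₀ y := by rw [hc]; nlinarith [h1, h2]
    exact le_of_mul_le_mul_left h3 hα0
  by_cases hc0 : c ≤ 0
  · linarith [hmin y hy]
  · push_neg at hc0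
    by_contra hcon
    push_neg at hcon
    set ε := F₀ z + c - F₀ y with hε
    have hε0 : 0 < ε := by simp only [hε]; linarith
    have hα0 : 0 < min (1/2) (ε / (2 * c)) := lt_min (by norm_num) (by positivity)
    have hα1 : min (1/2) (ε / (2 * c)) ≤ 1 := (min_le_left _ _).trans (by norm_num)
    have hk := key _ hα0 hα1
    have hαc : min (1/2) (ε / (2 * c)) * c ≤ ε / 2 := by
      have := min_le_right (1/2) (ε / (2 * c))
      calc min (1/2) (ε / (2 * c)) * c ≤ (ε / (2 * c)) * c := by nlinarith
        _ = ε / 2 := by field_simp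
    nlinarith [hk, hαc]

lemma inexact_dist {V : Type*} [NormedAddCommGroup V] [NormedSpace ℝ V] {Q : Set V}
    (hQ : Convex ℝ Q) {β δ : ℝ} (hβ : 0 < β) {F₀ : V → ℝ}
    (hsc : StrongConvexOnW Q (fun x => ‖x‖) β F₀)
    {zs zt : V} (hzs : zs ∈ Q) (hmin : ∀ y ∈ Q, F₀ zs ≤ F₀ y)
    (hin : InexactSol Q F₀ zs zt δ) :
    ‖zs - zt‖ ≤ Real.sqrt (2 * δ / β) := by
  obtain ⟨hztQ, g, hg1, hg2⟩ := hin
  have h1 : F₀ zt + g (zs - zt) ≤ F₀ zs := hg1 zs hzs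
  have h2 : F₀ zs + β / 2 * ‖zt - zs‖ ^ 2 ≤ F₀ zt := strong_min hQ hsc hzs hmin zt hztQ
  have h3 : β / 2 * ‖zt - zs‖ ^ 2 ≤ δ := by linarith
  have h4 : ‖zs - zt‖ ^ 2 ≤ 2 * δ / β := by
    rw [norm_sub_rev, le_div_iff₀ hβ]
    nlinarith
  calc ‖zs - zt‖ = Real.sqrt (‖zs - zt‖ ^ 2) := (Real.sqrt_sq (norm_nonneg _)).symm
    _ ≤ Real.sqrt (2 * δ / β) := Real.sqrt_le_sqrt h4

/-- distance between the exact and inexact composed operator values. -/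
theorem inexact_vs_exact_composed_operators
    {E F : Type*} [NormedAddCommGroup E] [NormedSpace ℝ E] [FiniteDimensional ℝ E]
    [NormedAddCommGroup F] [NormedSpace ℝ F] [FiniteDimensional ℝ F]
    {m : ℕ} (normH : (Fin m → ℝ) → ℝ)
    (hNpos : ∀ y, 0 ≤ normH y)
    (hNdef : ∀ y, normH y = 0 → y = 0)
    (hNhom : ∀ (c : ℝ) (y : Fin m → ℝ), normH (c • y) = |c| * normH y)
    (hNtri : ∀ y z, normH (y + z) ≤ normH y + normH z)
    {Q1 : Set E} {Q2 : Set F}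
    (hQ1ne : Q1.Nonempty) (hQ1cp : IsCompact Q1) (hQ1cv : Convex ℝ Q1)
    (hQ2ne : Q2.Nonempty) (hQ2cp : IsCompact Q2) (hQ2cv : Convex ℝ Q2)
    (f : E → ℝ) (h : F → ℝ) (σ1 σ2 : ℝ) (hσ1 : 0 < σ1) (hσ2 : 0 < σ2)
    (hfct : ContinuousOn f Q1) (hfsc : StrongConvexOnW Q1 (fun x => ‖x‖) σ1 f)
    (hhct : ContinuousOn h Q2) (hhsc : StrongConvexOnW Q2 (fun p => ‖p‖) σ2 h)
    (G1 : E → Fin m → ℝ) (G2 : F → Fin m → ℝ)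
    (L1 L2 : ℝ) (hL1 : 0 ≤ L1) (hL2 : 0 ≤ L2)
    (hG1 : ∀ x1 ∈ Q1, ∀ x2 ∈ Q1, dualNormH normH (G1 x1 - G1 x2) ≤ L1 * ‖x1 - x2‖)
    (hG2 : ∀ p1 ∈ Q2, ∀ p2 ∈ Q2, normH (G2 p1 - G2 p2) ≤ L2 * ‖p1 - p2‖)
    (Φ : E → F → ℝ)
    (hΦ : ∀ x p, Φ x p = f x + (∑ j, G1 x j * G2 p j) + h p)
    (hcvx1 : ∀ p ∈ Q2, ConvexOn ℝ Q1 (fun x => ∑ j, G1 x j * G2 p j))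
    (hcvx2 : ∀ x ∈ Q1, ConvexOn ℝ Q2 (fun p => ∑ j, G1 x j * G2 p j))
    (u : E → F) (v : F → E)
    (hu : ∀ x ∈ Q1, u x ∈ Q2 ∧ ∀ p ∈ Q2, Φ x (u x) ≤ Φ x p)
    (huu : ∀ x ∈ Q1, ∀ p ∈ Q2, (∀ q ∈ Q2, Φ x p ≤ Φ x q) → p = u x)
    (hv : ∀ p ∈ Q2, v p ∈ Q1 ∧ ∀ x ∈ Q1, Φ (v p) p ≤ Φ x p)
    (hvv : ∀ p ∈ Q2, ∀ x ∈ Q1, (∀ y ∈ Q1, Φ x p ≤ Φ y p) → x = v p)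
    (δ1 δ2 : ℝ) (hδ1 : 0 ≤ δ1) (hδ2 : 0 ≤ δ2)
    :
    (∀ x ∈ Q1, ∀ pt : F, ∀ xh : E,
      InexactSol Q2 (fun p => Φ x p) (u x) pt δ1 →
      InexactSol Q1 (fun y => Φ y pt) (v pt) xh δ2 →
      ‖v (u x) - xh‖ ≤ Real.sqrt (2 * δ2 / σ1) + L1 * L2 / σ1 * Real.sqrt (2 * δ1 / σ2)) ∧
    (∀ p ∈ Q2, ∀ xt : E, ∀ qh : F,
      InexactSol Q1 (fun x => Φ x p) (v p) xt δ2 →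
      InexactSol Q2 (fun q => Φ xt q) (u xt) qh δ1 →
      ‖u (v p) - qh‖ ≤ Real.sqrt (2 * δ1 / σ2) + L1 * L2 / σ2 * Real.sqrt (2 * δ2 / σ1)) := by
  classical
  have pair := pairing_le normH hNpos hNdef hNhom hNtri
  have key1 : ∀ p ∈ Q2, StrongConvexOnW Q1 (fun x => ‖x‖) σ1 (fun x => Φ x p) := by
    intro p hp x hx y hy α h0 h1
    have hf : f (α • x + (1 - α) • y) ≤
        α * f x + (1 - α) * f y - α * (1 - α) * (σ1 / 2) * ‖x - y‖ ^ 2 := hfsc hx hy h0 h1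
    have hb : (0:ℝ) ≤ 1 - α := by linarith
    have hab : α + (1 - α) = 1 := by ring
    have hcv := (hcvx1 p hp).2 hx hy h0 hb hab
    simp only [smul_eq_mul] at hcv
    simp only [hΦ]
    nlinarith [hf, hcv]
  have key2 : ∀ x ∈ Q1, StrongConvexOnW Q2 (fun p => ‖p‖) σ2 (fun p => Φ x p) := by
    intro x hx p hp q hq α h0 h1
    have hh2 : h (α • p + (1 - α) • q) ≤
        α * h p + (1 - α) * h q - α * (1 - α) * (σ2 / 2) * ‖p - q‖ ^ 2 := hhsc hp hq h0 h1
    have hb : (0:ℝ) ≤ 1 - α := by linarith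
    have hab : α + (1 - α) = 1 := by ring
    have hcv := (hcvx2 x hx).2 hp hq h0 hb hab
    simp only [smul_eq_mul] at hcv
    simp only [hΦ]
    nlinarith [hh2, hcv]
  have lipv : ∀ p1 ∈ Q2, ∀ p2 ∈ Q2, ‖v p1 - v p2‖ ≤ L1 * L2 / σ1 * ‖p1 - p2‖ := by
    intro p1 hp1 p2 hp2
    obtain ⟨hv1Q, hv1m⟩ := hv p1 hp1
    obtain ⟨hv2Q, hv2m⟩ := hv p2 hp2
    have h1 := strong_min hQ1cv (key1 p1 hp1) hv1Q hv1m (v p2) hv2Q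
    have h2 := strong_min hQ1cv (key1 p2 hp2) hv2Q hv2m (v p1) hv1Q
    simp only [hΦ] at h1 h2
    rw [norm_sub_rev (v p2) (v p1)] at h1
    have hpair : ∑ j, (G1 (v p2) - G1 (v p1)) j * (G2 p1 - G2 p2) j
        ≤ L1 * L2 * (‖v p1 - v p2‖ * ‖p1 - p2‖) := by
      calc ∑ j, (G1 (v p2) - G1 (v p1)) j * (G2 p1 - G2 p2) j
          ≤ dualNormH normH (G1 (v p2) - G1 (v p1)) * normH (G2 p1 - G2 p2) := pair _ _
        _ ≤ (L1 * ‖v p2 - v p1‖) * (L2 * ‖p1 - p2‖) :=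
            mul_le_mul (hG1 _ hv2Q _ hv1Q) (hG2 _ hp1 _ hp2) (hNpos _) (by positivity)
        _ = L1 * L2 * (‖v p1 - v p2‖ * ‖p1 - p2‖) := by
            rw [norm_sub_rev (v p2) (v p1)]; ring
    have hexp : ∑ j, (G1 (v p2) - G1 (v p1)) j * (G2 p1 - G2 p2) j
        = ((∑ j, G1 (v p2) j * G2 p1 j) + ∑ j, G1 (v p1) j * G2 p2 j)
          - ((∑ j, G1 (v p1) j * G2 p1 j) + ∑ j, G1 (v p2) j * G2 p2 j) := by
      rw [← Finset.sum_add_distrib, ← Finset.sum_add_distrib, ← Finset.sum_sub_distrib]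
      exact Finset.sum_congr rfl fun j _ => by simp only [Pi.sub_apply]; ring
    have hD : σ1 * ‖v p1 - v p2‖ ^ 2 ≤ L1 * L2 * (‖v p1 - v p2‖ * ‖p1 - p2‖) := by
      linarith [h1, h2, hpair, hexp.ge, hexp.le]
    rcases eq_or_lt_of_le (norm_nonneg (v p1 - v p2)) with hD0 | hD0
    · rw [← hD0]; positivity
    · rw [div_mul_eq_mul_div, le_div_iff₀ hσ1]
      nlinarith [hD, hD0]
  have lipu : ∀ x1 ∈ Q1, ∀ x2 ∈ Q1, ‖u x1 - u x2‖ ≤ L1 * L2 / σ2 * ‖x1 - x2‖ := by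
    intro x1 hx1 x2 hx2
    obtain ⟨hu1Q, hu1m⟩ := hu x1 hx1
    obtain ⟨hu2Q, hu2m⟩ := hu x2 hx2
    have h1 := strong_min hQ2cv (key2 x1 hx1) hu1Q hu1m (u x2) hu2Q
    have h2 := strong_min hQ2cv (key2 x2 hx2) hu2Q hu2m (u x1) hu1Q
    simp only [hΦ] at h1 h2
    rw [norm_sub_rev (u x2) (u x1)] at h1
    have hpair : ∑ j, (G1 x1 - G1 x2) j * (G2 (u x2) - G2 (u x1)) j
        ≤ L1 * L2 * (‖x1 - x2‖ * ‖u x1 - u x2‖) := by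
      calc ∑ j, (G1 x1 - G1 x2) j * (G2 (u x2) - G2 (u x1)) j
          ≤ dualNormH normH (G1 x1 - G1 x2) * normH (G2 (u x2) - G2 (u x1)) := pair _ _
        _ ≤ (L1 * ‖x1 - x2‖) * (L2 * ‖u x2 - u x1‖) :=
            mul_le_mul (hG1 _ hx1 _ hx2) (hG2 _ hu2Q _ hu1Q) (hNpos _) (by positivity)
        _ = L1 * L2 * (‖x1 - x2‖ * ‖u x1 - u x2‖) := by
            rw [norm_sub_rev (u x2) (u x1)]; ring
    have hexp : ∑ j, (G1 x1 - G1 x2) j * (G2 (u x2) - G2 (u x1)) j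
        = ((∑ j, G1 x1 j * G2 (u x2) j) + ∑ j, G1 x2 j * G2 (u x1) j)
          - ((∑ j, G1 x1 j * G2 (u x1) j) + ∑ j, G1 x2 j * G2 (u x2) j) := by
      rw [← Finset.sum_add_distrib, ← Finset.sum_add_distrib, ← Finset.sum_sub_distrib]
      exact Finset.sum_congr rfl fun j _ => by simp only [Pi.sub_apply]; ring
    have hD : σ2 * ‖u x1 - u x2‖ ^ 2 ≤ L1 * L2 * (‖x1 - x2‖ * ‖u x1 - u x2‖) := by
      linarith [h1, h2, hpair, hexp.ge, hexp.le]
    rcases eq_or_lt_of_le (norm_nonneg (u x1 - u x2)) with hD0 | hD0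
    · rw [← hD0]; positivity
    · rw [div_mul_eq_mul_div, le_div_iff₀ hσ2]
      nlinarith [hD, hD0]
  constructor
  · intro x hx pt xh hin1 hin2
    have hptQ : pt ∈ Q2 := hin1.1
    obtain ⟨huxQ, huxm⟩ := hu x hx
    have d1 : ‖u x - pt‖ ≤ Real.sqrt (2 * δ1 / σ2) :=
      inexact_dist hQ2cv hσ2 (key2 x hx) huxQ huxm hin1
    obtain ⟨hvQ, hvm⟩ := hv pt hptQ
    have d2 : ‖v pt - xh‖ ≤ Real.sqrt (2 * δ2 / σ1) :=
      inexact_dist hQ1cv hσ1 (key1 pt hptQ) hvQ hvm hin2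
    have d3 : ‖v (u x) - v pt‖ ≤ L1 * L2 / σ1 * ‖u x - pt‖ := lipv _ huxQ _ hptQ
    have d4 : L1 * L2 / σ1 * ‖u x - pt‖ ≤ L1 * L2 / σ1 * Real.sqrt (2 * δ1 / σ2) :=
      mul_le_mul_of_nonneg_left d1 (by positivity)
    have tri : ‖v (u x) - xh‖ ≤ ‖v (u x) - v pt‖ + ‖v pt - xh‖ := by
      have := dist_triangle (v (u x)) (v pt) xh
      simpa [dist_eq_norm] using this
    linarith
  · intro p hp xt qh hin1 hin2
    have hxtQ : xt ∈ Q1 := hin1.1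
    obtain ⟨hvQ, hvm⟩ := hv p hp
    have d1 : ‖v p - xt‖ ≤ Real.sqrt (2 * δ2 / σ1) :=
      inexact_dist hQ1cv hσ1 (key1 p hp) hvQ hvm hin1
    obtain ⟨huQ, hum⟩ := hu xt hxtQ
    have d2 : ‖u xt - qh‖ ≤ Real.sqrt (2 * δ1 / σ2) :=
      inexact_dist hQ2cv hσ2 (key2 xt hxtQ) huQ hum hin2
    have d3 : ‖u (v p) - u xt‖ ≤ L1 * L2 / σ2 * ‖v p - xt‖ := lipu _ hvQ _ hxtQ
    have d4 : L1 * L2 / σ2 * ‖v p - xt‖ ≤ L1 * L2 / σ2 * Real.sqrt (2 * δ2 / σ1) :=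
      mul_le_mul_of_nonneg_left d1 (by positivity)
    have tri : ‖u (v p) - qh‖ ≤ ‖u (v p) - u xt‖ + ‖u xt - qh‖ := by
      have := dist_triangle (u (v p)) (u xt) qh
      simpa [dist_eq_norm] using this
    linarith
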